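/- Let D = {(x,y) ∈ ℝ²: x² + y² < 1/2}, and define G: D → ℝ² by G(x,y) := (2𝒫(y,−x) − 2𝒫(−y,x), 2𝒫(x,y) − 2𝒫(−x,−y)). Then G is injective on D and its image G(D) equals the open square {(s,t) ∈ ℝ²: |s| + |t| < 2}. -/

import Mathlib

/-- The limiting placement-probability function `𝒫` given by the arctangent formula. -/
noncomputable def arctanP (x y : ℝ) : ℝ :=
  if x ^ 2 + y ^ 2 < 1 / 2 then
    1 / 2 + (1 / Real.pi) * Real.arctan ((2 * y - 1) / Real.sqrt (1 - 2 * x ^ 2 - 2 * y ^ 2))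
  else if y < 1 / 2 then 0 else 1

/-- The tilt map `G(x,y) = (2𝒫(y,−x) − 2𝒫(−y,x), 2𝒫(x,y) − 2𝒫(−x,−y))`. -/
noncomputable def tiltMap (q : ℝ × ℝ) : ℝ × ℝ :=
  (2 * arctanP q.2 (-q.1) - 2 * arctanP (-q.2) q.1,
    2 * arctanP q.1 q.2 - 2 * arctanP (-q.1) (-q.2))

open Real Set

lemma sqrt_inj_aux {u v : ℝ} (hu : 0 ≤ u) (hv : 0 ≤ v) (h : u ^ 2 = v ^ 2) : u = v := by
  rw [← Real.sqrt_sq hu, ← Real.sqrt_sq hv, h]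

lemma angle_eq_of {a b : ℝ} (ha : |a| < π) (hb : |b| < π)
    (hc : Real.cos a = Real.cos b) (hs : Real.sin a = Real.sin b) : a = b := by
  obtain ⟨ha1, ha2⟩ := abs_lt.1 ha
  obtain ⟨hb1, hb2⟩ := abs_lt.1 hb
  have e1 := Complex.arg_cos_add_sin_mul_I (θ := a) ⟨ha1, ha2.le⟩
  have e2 := Complex.arg_cos_add_sin_mul_I (θ := b) ⟨hb1, hb2.le⟩
  rw [← e1, ← e2, ← Complex.ofReal_cos, ← Complex.ofReal_cos, ← Complex.ofReal_sin,
    ← Complex.ofReal_sin, hc, hs]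

lemma cos_add_cos_pos {a b : ℝ} (h : |a| + |b| < π) : 0 < Real.cos a + Real.cos b := by
  have h1 : Real.cos (π - |b|) < Real.cos |a| := by
    apply Real.strictAntiOn_cos ⟨abs_nonneg a, by linarith [abs_nonneg b]⟩
      ⟨by linarith [abs_nonneg a], by linarith [abs_nonneg b]⟩ (by linarith)
  rw [Real.cos_pi_sub, Real.cos_abs, Real.cos_abs] at h1
  linarith

lemma abs_add_abs_lt {a b : ℝ} (ha : |a| < π) (hb : |b| < π)
    (h : 0 < Real.cos a + Real.cos b) : |a| + |b| < π := by
  by_contra hc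
  push_neg at hc
  have h1 : Real.cos |a| ≤ Real.cos (π - |b|) :=
    Real.strictAntiOn_cos.antitoneOn ⟨by linarith [abs_nonneg b], by linarith [abs_nonneg b]⟩
      ⟨abs_nonneg a, ha.le⟩ (by linarith)
  rw [Real.cos_pi_sub, Real.cos_abs, Real.cos_abs] at h1
  linarith

lemma neg_one_lt_cos_of {a : ℝ} (ha : |a| < π) : -1 < Real.cos a := by
  have h1 : Real.cos π < Real.cos |a| :=
    Real.strictAntiOn_cos ⟨abs_nonneg a, ha.le⟩ ⟨Real.pi_nonneg, le_refl _⟩ ha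
  rw [Real.cos_pi, Real.cos_abs] at h1
  exact h1

noncomputable def Fa (x y : ℝ) : ℝ :=
  Real.arctan ((2 * y - 1) / Real.sqrt (1 - 2 * x ^ 2 - 2 * y ^ 2)) +
  Real.arctan ((2 * y + 1) / Real.sqrt (1 - 2 * x ^ 2 - 2 * y ^ 2))

lemma Fa_abs_lt (x y : ℝ) : |Fa x y| < π := by
  have h1 := Real.arctan_lt_pi_div_two ((2 * y - 1) / Real.sqrt (1 - 2 * x ^ 2 - 2 * y ^ 2))
  have h2 := Real.neg_pi_div_two_lt_arctan ((2 * y - 1) / Real.sqrt (1 - 2 * x ^ 2 - 2 * y ^ 2))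
  have h3 := Real.arctan_lt_pi_div_two ((2 * y + 1) / Real.sqrt (1 - 2 * x ^ 2 - 2 * y ^ 2))
  have h4 := Real.neg_pi_div_two_lt_arctan ((2 * y + 1) / Real.sqrt (1 - 2 * x ^ 2 - 2 * y ^ 2))
  rw [abs_lt, Fa]
  constructor <;> linarith

lemma arctanP_of {x y : ℝ} (h : x ^ 2 + y ^ 2 < 1 / 2) :
    arctanP x y = 1 / 2 + (1 / π) * Real.arctan ((2 * y - 1) / Real.sqrt (1 - 2 * x ^ 2 - 2 * y ^ 2)) :=
  if_pos h

lemma tilt_eq {x y : ℝ} (h : x ^ 2 + y ^ 2 < 1 / 2) :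
    tiltMap (x, y) = (-(2 / π) * Fa y x, (2 / π) * Fa x y) := by
  have c1 : y ^ 2 + (-x) ^ 2 < 1 / 2 := by rw [neg_pow]; ring_nf; ring_nf at h; linarith
  have c2 : (-y) ^ 2 + x ^ 2 < 1 / 2 := by rw [neg_pow]; ring_nf; ring_nf at h; linarith
  have c3 : (-x) ^ 2 + (-y) ^ 2 < 1 / 2 := by rw [neg_pow, neg_pow]; ring_nf; ring_nf at h; linarith
  show (2 * arctanP y (-x) - 2 * arctanP (-y) x, 2 * arctanP x y - 2 * arctanP (-x) (-y)) = _
  rw [arctanP_of c1, arctanP_of c2, arctanP_of h, arctanP_of c3]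
  have e1 : (2 * (-x) - 1) / Real.sqrt (1 - 2 * y ^ 2 - 2 * (-x) ^ 2)
      = -((2 * x + 1) / Real.sqrt (1 - 2 * y ^ 2 - 2 * x ^ 2)) := by
    rw [neg_pow]; ring_nf
  have e2 : (2 * (-y) - 1) / Real.sqrt (1 - 2 * (-x) ^ 2 - 2 * (-y) ^ 2)
      = -((2 * y + 1) / Real.sqrt (1 - 2 * x ^ 2 - 2 * y ^ 2)) := by
    rw [neg_pow, neg_pow]; ring_nf
  rw [e1, e2, Real.arctan_neg, Real.arctan_neg]
  rw [Prod.mk.injEq]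
  constructor <;> · rw [Fa]; ring

lemma Fa_cos_sin {x y : ℝ} (h : x ^ 2 + y ^ 2 < 1 / 2) :
    Real.cos (Fa x y) = (1 - x ^ 2 - 3 * y ^ 2) / Real.sqrt ((1 - x ^ 2 - y ^ 2) ^ 2 - 4 * x ^ 2 * y ^ 2) ∧
    Real.sin (Fa x y) = 2 * y * Real.sqrt (1 - 2 * x ^ 2 - 2 * y ^ 2) /
      Real.sqrt ((1 - x ^ 2 - y ^ 2) ^ 2 - 4 * x ^ 2 * y ^ 2) := by
  rw [show Fa x y = Real.arctan ((2 * y - 1) / Real.sqrt (1 - 2 * x ^ 2 - 2 * y ^ 2)) +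
      Real.arctan ((2 * y + 1) / Real.sqrt (1 - 2 * x ^ 2 - 2 * y ^ 2)) from rfl]
  set s := Real.sqrt (1 - 2 * x ^ 2 - 2 * y ^ 2) with hs_def
  have hspos : 0 < s := Real.sqrt_pos.2 (by linarith)
  have hs2 : s ^ 2 = 1 - 2 * x ^ 2 - 2 * y ^ 2 := Real.sq_sqrt (by linarith)
  set R := Real.sqrt ((1 - x ^ 2 - y ^ 2) ^ 2 - 4 * x ^ 2 * y ^ 2) with hR_def
  have hA : (0:ℝ) < (1 - y) ^ 2 - x ^ 2 := by nlinarith [sq_nonneg (2 * y - 1)]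
  have hB : (0:ℝ) < (1 + y) ^ 2 - x ^ 2 := by nlinarith [sq_nonneg (2 * y + 1)]
  have hPpos : (0:ℝ) < (1 - x ^ 2 - y ^ 2) ^ 2 - 4 * x ^ 2 * y ^ 2 := by nlinarith
  have hRpos : 0 < R := Real.sqrt_pos.2 hPpos
  have hR2 : R ^ 2 = (1 - x ^ 2 - y ^ 2) ^ 2 - 4 * x ^ 2 * y ^ 2 := Real.sq_sqrt hPpos.le
  set a := (2 * y - 1) / s with ha_def
  set b := (2 * y + 1) / s with hb_def
  have hQa : (0:ℝ) < Real.sqrt (1 + a ^ 2) := Real.sqrt_pos.2 (by positivity)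
  have hQb : (0:ℝ) < Real.sqrt (1 + b ^ 2) := Real.sqrt_pos.2 (by positivity)
  have hQa2 : (Real.sqrt (1 + a ^ 2)) ^ 2 = 1 + a ^ 2 := Real.sq_sqrt (by positivity)
  have hQb2 : (Real.sqrt (1 + b ^ 2)) ^ 2 = 1 + b ^ 2 := Real.sq_sqrt (by positivity)
  have ha2 : a ^ 2 * s ^ 2 = (2 * y - 1) ^ 2 := by rw [ha_def]; field_simp
  have hb2 : b ^ 2 * s ^ 2 = (2 * y + 1) ^ 2 := by rw [hb_def]; field_simp
  have key : Real.sqrt (1 + a ^ 2) * Real.sqrt (1 + b ^ 2) * s ^ 2 = 2 * R := by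
    apply sqrt_inj_aux (by positivity) (by positivity)
    calc (Real.sqrt (1 + a ^ 2) * Real.sqrt (1 + b ^ 2) * s ^ 2) ^ 2
        = (s ^ 2 + a ^ 2 * s ^ 2) * (s ^ 2 + b ^ 2 * s ^ 2) := by
          rw [mul_pow, mul_pow, hQa2, hQb2]; ring
      _ = (2 * R) ^ 2 := by rw [ha2, hb2, hs2]; linear_combination (-4 : ℝ) * hR2
  have hab : a * b * s ^ 2 = 4 * y ^ 2 - 1 := by
    rw [ha_def, hb_def]; field_simp; ring
  have habs : (a + b) * s = 4 * y := by
    rw [ha_def, hb_def]; field_simp; ring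
  have hcos : Real.cos (Real.arctan a + Real.arctan b)
      = (1 - a * b) / (Real.sqrt (1 + a ^ 2) * Real.sqrt (1 + b ^ 2)) := by
    rw [Real.cos_add, Real.cos_arctan, Real.cos_arctan, Real.sin_arctan, Real.sin_arctan]
    field_simp
  have hsin : Real.sin (Real.arctan a + Real.arctan b)
      = (a + b) / (Real.sqrt (1 + a ^ 2) * Real.sqrt (1 + b ^ 2)) := by
    rw [Real.sin_add, Real.cos_arctan, Real.cos_arctan, Real.sin_arctan, Real.sin_arctan]
    field_simp
  have hQval : Real.sqrt (1 + a ^ 2) * Real.sqrt (1 + b ^ 2) = 2 * R / s ^ 2 := by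
    field_simp [hspos.ne'] at key ⊢
    linarith [key]
  clear_value a b
  constructor
  · rw [hcos, hQval]
    field_simp
    linear_combination hs2 - hab
  · rw [hsin, hQval]
    field_simp
    linear_combination habs
noncomputable def Hfun (st : ℝ × ℝ) : ℝ × ℝ :=
  (-Real.sin (π * st.1 / 2) / Real.sqrt (4 - (Real.cos (π * st.2 / 2) - Real.cos (π * st.1 / 2)) ^ 2),
   Real.sin (π * st.2 / 2) / Real.sqrt (4 - (Real.cos (π * st.2 / 2) - Real.cos (π * st.1 / 2)) ^ 2))

lemma leftinv {x y : ℝ} (h : x ^ 2 + y ^ 2 < 1 / 2) : Hfun (tiltMap (x, y)) = (x, y) := by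
  have h' : y ^ 2 + x ^ 2 < 1 / 2 := by linarith
  rw [tilt_eq h]
  have hpi := Real.pi_ne_zero
  have e1 : π * (-(2 / π) * Fa y x) / 2 = -(Fa y x) := by field_simp
  have e2 : π * (2 / π * Fa x y) / 2 = Fa x y := by field_simp
  show (-Real.sin (π * (-(2 / π) * Fa y x) / 2) /
        Real.sqrt (4 - (Real.cos (π * (2 / π * Fa x y) / 2) - Real.cos (π * (-(2 / π) * Fa y x) / 2)) ^ 2),
      Real.sin (π * (2 / π * Fa x y) / 2) /
        Real.sqrt (4 - (Real.cos (π * (2 / π * Fa x y) / 2) - Real.cos (π * (-(2 / π) * Fa y x) / 2)) ^ 2)) = (x, y)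
  rw [e1, e2, Real.sin_neg, Real.cos_neg, neg_neg]
  obtain ⟨hcxy, hsxy⟩ := Fa_cos_sin h
  obtain ⟨hcyx, hsyx⟩ := Fa_cos_sin h'
  rw [show (1 - y ^ 2 - x ^ 2) ^ 2 - 4 * y ^ 2 * x ^ 2 = (1 - x ^ 2 - y ^ 2) ^ 2 - 4 * x ^ 2 * y ^ 2 from by ring] at hcyx hsyx
  rw [show 1 - 2 * y ^ 2 - 2 * x ^ 2 = 1 - 2 * x ^ 2 - 2 * y ^ 2 from by ring] at hsyx
  set s := Real.sqrt (1 - 2 * x ^ 2 - 2 * y ^ 2) with hs_def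
  have hspos : 0 < s := Real.sqrt_pos.2 (by linarith)
  have hs2 : s ^ 2 = 1 - 2 * x ^ 2 - 2 * y ^ 2 := Real.sq_sqrt (by linarith)
  set R := Real.sqrt ((1 - x ^ 2 - y ^ 2) ^ 2 - 4 * x ^ 2 * y ^ 2) with hR_def
  have hPpos : (0:ℝ) < (1 - x ^ 2 - y ^ 2) ^ 2 - 4 * x ^ 2 * y ^ 2 := by
    have h1 : (0:ℝ) < 1 - (x + y) ^ 2 := by nlinarith [sq_nonneg (x - y)]
    have h2 : (0:ℝ) < 1 - (x - y) ^ 2 := by nlinarith [sq_nonneg (x + y)]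
    nlinarith [mul_pos h1 h2]
  have hRpos : 0 < R := Real.sqrt_pos.2 hPpos
  have hR2 : R ^ 2 = (1 - x ^ 2 - y ^ 2) ^ 2 - 4 * x ^ 2 * y ^ 2 := Real.sq_sqrt hPpos.le
  rw [hcxy, hcyx, hsxy, hsyx]
  have hDd : Real.sqrt (4 - ((1 - x ^ 2 - 3 * y ^ 2) / R - (1 - y ^ 2 - 3 * x ^ 2) / R) ^ 2) = 2 * s / R := by
    rw [show 4 - ((1 - x ^ 2 - 3 * y ^ 2) / R - (1 - y ^ 2 - 3 * x ^ 2) / R) ^ 2 = (2 * s / R) ^ 2 from by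
      field_simp
      linear_combination (4 : ℝ) * hR2 - 4 * hs2]
    exact Real.sqrt_sq (by positivity)
  rw [hDd, Prod.mk.injEq]
  constructor
  · field_simp
  · field_simp
/-- Heterogeneity (subsection 6.5): on the open disk `x² + y² < 1/2` the tilt map is
injective, with image the open square `|s| + |t| < 2`. -/
theorem statement17 :
    Set.InjOn tiltMap {q : ℝ × ℝ | q.1 ^ 2 + q.2 ^ 2 < 1 / 2} ∧
    tiltMap '' {q : ℝ × ℝ | q.1 ^ 2 + q.2 ^ 2 < 1 / 2} =
      {st : ℝ × ℝ | |st.1| + |st.2| < 2} := by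
  constructor
  · intro p hp q hq heq
    have h1 : Hfun (tiltMap (p.1, p.2)) = (p.1, p.2) := leftinv hp
    have h2 : Hfun (tiltMap (q.1, q.2)) = (q.1, q.2) := leftinv hq
    have : p = (p.1, p.2) := rfl
    rw [this, show q = (q.1, q.2) from rfl, ← h1, ← h2]
    rw [show ((p.1, p.2) : ℝ × ℝ) = p from rfl, show ((q.1, q.2) : ℝ × ℝ) = q from rfl, heq]
  · ext st
    simp only [Set.mem_image, Set.mem_setOf_eq]
    constructor
    · rintro ⟨⟨x, y⟩, hq, rfl⟩
      simp only [Set.mem_setOf_eq] at hq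
      rw [tilt_eq hq]
      simp only
      have h' : y ^ 2 + x ^ 2 < 1 / 2 := by linarith
      have hPpos : (0:ℝ) < (1 - x ^ 2 - y ^ 2) ^ 2 - 4 * x ^ 2 * y ^ 2 := by
        have h1 : (0:ℝ) < 1 - (x + y) ^ 2 := by nlinarith [sq_nonneg (x - y)]
        have h2 : (0:ℝ) < 1 - (x - y) ^ 2 := by nlinarith [sq_nonneg (x + y)]
        nlinarith [mul_pos h1 h2]
      have hsum : |Fa y x| + |Fa x y| < π := by
        apply abs_add_abs_lt (Fa_abs_lt y x) (Fa_abs_lt x y)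
        obtain ⟨hcyx, -⟩ := Fa_cos_sin h'
        obtain ⟨hcxy, -⟩ := Fa_cos_sin hq
        rw [show (1 - y ^ 2 - x ^ 2) ^ 2 - 4 * y ^ 2 * x ^ 2
            = (1 - x ^ 2 - y ^ 2) ^ 2 - 4 * x ^ 2 * y ^ 2 from by ring] at hcyx
        rw [hcyx, hcxy, ← add_div]
        exact div_pos (by linarith) (Real.sqrt_pos.2 hPpos)
      have hpi2 : (0:ℝ) < 2 / π := by positivity
      have ha : |(-(2 / π) * Fa y x)| = (2 / π) * |Fa y x| := by
        rw [abs_mul, abs_neg, abs_of_pos hpi2]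
      have hb : |(2 / π * Fa x y)| = (2 / π) * |Fa x y| := by
        rw [abs_mul, abs_of_pos hpi2]
      rw [ha, hb]
      have hmul := mul_lt_mul_of_pos_left hsum hpi2
      have hval : (2 / π) * π = 2 := by field_simp
      nlinarith [hmul]
    · intro hst
      set σ := π * st.1 / 2 with hσ
      set τ := π * st.2 / 2 with hτ
      have hpi := Real.pi_pos
      have habs : |σ| + |τ| < π := by
        rw [hσ, hτ, abs_div, abs_mul, abs_of_pos hpi, abs_two, abs_div, abs_mul,
          abs_of_pos hpi, abs_two]
        nlinarith
      have hσlt : |σ| < π := lt_of_le_of_lt (le_add_of_nonneg_right (abs_nonneg τ)) habs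
      have hτlt : |τ| < π := lt_of_le_of_lt (le_add_of_nonneg_left (abs_nonneg σ)) habs
      have hcc : 0 < Real.cos σ + Real.cos τ := cos_add_cos_pos habs
      have hc1le : Real.cos σ ≤ 1 := Real.cos_le_one σ
      have hc2le : Real.cos τ ≤ 1 := Real.cos_le_one τ
      have hc1gt : -1 < Real.cos σ := neg_one_lt_cos_of hσlt
      have hc2gt : -1 < Real.cos τ := neg_one_lt_cos_of hτlt
      have hDpos : (0:ℝ) < 4 - (Real.cos τ - Real.cos σ) ^ 2 := by nlinarith
      set Dd := Real.sqrt (4 - (Real.cos τ - Real.cos σ) ^ 2) with hDd_def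
      have hDdpos : 0 < Dd := Real.sqrt_pos.2 hDpos
      have hDd2 : Dd ^ 2 = 4 - (Real.cos τ - Real.cos σ) ^ 2 := Real.sq_sqrt hDpos.le
      set x := -Real.sin σ / Dd with hx_def
      set y := Real.sin τ / Dd with hy_def
      have hx2 : x ^ 2 = (1 - Real.cos σ ^ 2) / Dd ^ 2 := by
        rw [hx_def, div_pow, neg_sq, Real.sin_sq]
      have hy2 : y ^ 2 = (1 - Real.cos τ ^ 2) / Dd ^ 2 := by
        rw [hy_def, div_pow, Real.sin_sq]
      have hmem : x ^ 2 + y ^ 2 < 1 / 2 := by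
        rw [hx2, hy2, ← add_div, div_lt_iff₀ (by positivity : (0:ℝ) < Dd ^ 2), hDd2]
        nlinarith
      refine ⟨(x, y), hmem, ?_⟩
      rw [tilt_eq hmem]
      have hmem' : y ^ 2 + x ^ 2 < 1 / 2 := by linarith
      obtain ⟨hcxy, hsxy⟩ := Fa_cos_sin hmem
      obtain ⟨hcyx, hsyx⟩ := Fa_cos_sin hmem'
      rw [show (1 - y ^ 2 - x ^ 2) ^ 2 - 4 * y ^ 2 * x ^ 2
          = (1 - x ^ 2 - y ^ 2) ^ 2 - 4 * x ^ 2 * y ^ 2 from by ring] at hcyx hsyx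
      rw [show 1 - 2 * y ^ 2 - 2 * x ^ 2 = 1 - 2 * x ^ 2 - 2 * y ^ 2 from by ring] at hsyx
      have hsval : Real.sqrt (1 - 2 * x ^ 2 - 2 * y ^ 2) = (Real.cos σ + Real.cos τ) / Dd := by
        rw [show 1 - 2 * x ^ 2 - 2 * y ^ 2 = ((Real.cos σ + Real.cos τ) / Dd) ^ 2 from by
          rw [hx2, hy2]; field_simp; linear_combination hDd2]
        exact Real.sqrt_sq (by positivity)
      have hRval : Real.sqrt ((1 - x ^ 2 - y ^ 2) ^ 2 - 4 * x ^ 2 * y ^ 2)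
          = 2 * (Real.cos σ + Real.cos τ) / Dd ^ 2 := by
        rw [show (1 - x ^ 2 - y ^ 2) ^ 2 - 4 * x ^ 2 * y ^ 2
            = (2 * (Real.cos σ + Real.cos τ) / Dd ^ 2) ^ 2 from by
          rw [hx2, hy2, hDd2]; field_simp; ring]
        exact Real.sqrt_sq (by positivity)
      rw [hRval] at hcxy hcyx
      rw [hRval, hsval] at hsxy hsyx
      have hFxy : Fa x y = τ := by
        apply angle_eq_of (Fa_abs_lt x y) hτlt
        · rw [hcxy, hx2, hy2, hDd2]
          field_simp
          ring
        · rw [hsxy, hy_def]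
          field_simp
      have hFyx : Fa y x = -σ := by
        apply angle_eq_of (Fa_abs_lt y x) (by rwa [abs_neg])
        · rw [hcyx, Real.cos_neg, hx2, hy2, hDd2]
          field_simp
          ring
        · rw [hsyx, Real.sin_neg, hx_def]
          field_simp
      rw [hFxy, hFyx]
      have : st = (st.1, st.2) := rfl
      rw [this, Prod.mk.injEq]
      constructor
      · rw [hσ]; field_simp
      · rw [hτ]; field_simp
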